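/- For 1 ≤ j < (n+1)/2, the polynomial Â'_{n,j}(t) satisfies the recurrence Â'_{n,j}(t) = (1+t) Σ_{k=1}^{j-1} Â'_{n-1,k}(t) + 2t Σ_{k=j}^{⌊n/2⌋} Â_{n-1,k}(t). -/

import Mathlib

open scoped Classical

/-- The number of descents of a permutation of `Fin n` (positions are 0-based:
`i` is a descent if `w i > w (i+1)`). -/
def des {n : ℕ} (w : Equiv.Perm (Fin n)) : ℕ :=
  (Finset.univ.filter fun i : Fin n => ∃ h : (i : ℕ) + 1 < n, w ⟨(i : ℕ) + 1, h⟩ < w i).card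

/-- `A n i j` = number of permutations `w` of `{1,…,n}` with `w(1) = j` (1-based)
and exactly `i` descents. -/
def A (n i j : ℕ) : ℕ :=
  (Finset.univ.filter fun w : Equiv.Perm (Fin n) =>
    (∀ x : Fin n, (x : ℕ) = 0 → (w x : ℕ) + 1 = j) ∧ des w = i).card

/-- The Eulerian number: permutations of `{1,…,n}` with exactly `i` descents. -/
def Eul (n i : ℕ) : ℕ :=
  (Finset.univ.filter fun w : Equiv.Perm (Fin n) => des w = i).card

open Polynomial

/-- Restricted Eulerian polynomial `A_{n,j}(t) = Σ_{w(1)=j} t^{d(w)}`. -/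
noncomputable def Apoly (n j : ℕ) : Polynomial ℤ :=
  ∑ w ∈ (Finset.univ.filter fun w : Equiv.Perm (Fin n) =>
      ∀ x : Fin n, (x : ℕ) = 0 → (w x : ℕ) + 1 = j), X ^ des w

/-- Symmetric restricted Eulerian polynomial
`Â_{n,j}(t) = Σ_{w(1) ∈ {j, n+1-j}} t^{d(w)}`. -/
noncomputable def AhatPoly (n j : ℕ) : Polynomial ℤ :=
  ∑ w ∈ (Finset.univ.filter fun w : Equiv.Perm (Fin n) =>
      ∀ x : Fin n, (x : ℕ) = 0 → ((w x : ℕ) + 1 = j ∨ (w x : ℕ) + 1 = n + 1 - j)),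
    X ^ des w

/-- `Â'_{n,j}(t) = t·A_{n,j}(t) + A_{n,n+1-j}(t)`. -/
noncomputable def AhatPoly' (n j : ℕ) : Polynomial ℤ :=
  X * Apoly n j + Apoly n (n + 1 - j)

/-!
Deleting the first letter `w(1) = j` of `w ∈ S_n` and standardising the rest is a bijection onto
`S_{n-1}` that keeps all descents except possibly the one at position 1, which occurs exactly when
the new first letter `k` is `< j`. Hence `A_{n,j} = t Σ_{k<j} A_{n-1,k} + Σ_{k≥j} A_{n-1,k}`.
Applying this to `j` and `n+1-j`, the terms `A_{n-1,k}` with `k < j` and `k > n - j` combine into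
`(1+t) Â'_{n-1,k}`, and those with `j ≤ k ≤ n - j` get the coefficient `2t`; the latter add up to
`Σ_{k=j}^{⌊n/2⌋} Â_{n-1,k}`.
-/

open Finset Equiv

lemma des_eq_card_filter_succ_lt_castSucc {m : ℕ} (w : Perm (Fin (m + 1))) :
    des w = #{i : Fin m | w i.succ < w i.castSucc} := by
  rw [des, card_filter, card_filter, Fin.sum_univ_castSucc]
  simp [Fin.succ]

lemma Equiv.optionCongr_removeNone {α : Type*} [DecidableEq α] {u : Perm (Option α)}
    (hu : u none = none) : (removeNone u).optionCongr = u := by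
  ext1 (_ | x) <;> simp [hu]

/-- `w 0 = p`, and the remaining values are those of `e` pushed past `p` by the order embedding
`p.succAbove`, so the descents of `e` survive. -/
noncomputable def consPerm {m : ℕ} (p : Fin (m + 1)) (e : Perm (Fin m)) : Perm (Fin (m + 1)) :=
  (finSuccEquiv' 0).trans (e.optionCongr.trans (finSuccEquiv' p).symm)

@[simp]
lemma consPerm_zero {m : ℕ} (p : Fin (m + 1)) (e : Perm (Fin m)) : consPerm p e 0 = p := by
  simp [consPerm]

@[simp]
lemma consPerm_succ {m : ℕ} (p : Fin (m + 1)) (e : Perm (Fin m)) (i : Fin m) :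
    consPerm p e i.succ = p.succAbove (e i) := by
  rw [consPerm, trans_apply, ← Fin.zero_succAbove, finSuccEquiv'_succAbove]
  simp [finSuccEquiv'_symm_some]

lemma consPerm_injective {m : ℕ} (p : Fin (m + 1)) : Function.Injective (consPerm (m := m) p) :=
  fun e e' h => Equiv.ext fun i => p.succAbove_right_injective <| by
    rw [← consPerm_succ, ← consPerm_succ, h]

lemma exists_consPerm_eq {m : ℕ} {w : Perm (Fin (m + 1))} : ∃ e, consPerm (w 0) e = w := by
  set u := (finSuccEquiv' 0).symm.trans (w.trans (finSuccEquiv' (w 0)))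
  refine ⟨removeNone u, ?_⟩
  rw [consPerm, optionCongr_removeNone (by simp [u])]
  ext1 x
  simp [u]

lemma sum_filter_apply_zero_eq_sum_consPerm {M : Type*} [AddCommMonoid M] {m : ℕ}
    (p : Fin (m + 1)) (f : Perm (Fin (m + 1)) → M) :
    ∑ w with w 0 = p, f w = ∑ e, f (consPerm p e) := by
  symm
  refine sum_bij (fun e _ => consPerm p e) (by simp) (fun e _ e' _ => (consPerm_injective p ·))
    (fun w hw => ?_) (fun _ _ => rfl)
  obtain ⟨e, he⟩ := exists_consPerm_eq (w := w)
  exact ⟨e, mem_univ _, by rwa [← (mem_filter.mp hw).2]⟩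

lemma des_consPerm {m : ℕ} (p : Fin (m + 2)) (e : Perm (Fin (m + 1))) :
    des (consPerm p e) = (if (e 0).castSucc < p then 1 else 0) + des e := by
  rw [des_eq_card_filter_succ_lt_castSucc, des_eq_card_filter_succ_lt_castSucc,
    Fin.card_filter_univ_succ']
  congr 1
  · simp only [consPerm_succ, Fin.castSucc_zero, consPerm_zero, Fin.succAbove_lt_iff_castSucc_lt]
  · simp [Fin.succAbove_lt_succAbove_iff]

lemma forall_val_eq_zero_imp_iff {m : ℕ} [NeZero m] {P : Fin m → Prop} :
    (∀ x : Fin m, (x : ℕ) = 0 → P x) ↔ P 0 := by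
  simp [Fin.val_eq_zero_iff]

section FirstValue

variable {m : ℕ} [NeZero m]

lemma Apoly_eq_sum_filter (j : ℕ) :
    Apoly m j = ∑ w : Perm (Fin m) with (w 0 : ℕ) + 1 = j, X ^ des w := by
  simp only [Apoly, forall_val_eq_zero_imp_iff]

lemma sum_Apoly (s : Finset ℕ) :
    ∑ k ∈ s, Apoly m k = ∑ w : Perm (Fin m) with (w 0 : ℕ) + 1 ∈ s, X ^ des w := by
  rw [← sum_fiberwise_of_maps_to (g := fun w : Perm (Fin m) => (w 0 : ℕ) + 1) (t := s)
    fun w hw => (mem_filter.mp hw).2]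
  refine sum_congr rfl fun k hk => ?_
  rw [Apoly_eq_sum_filter, filter_filter]
  refine sum_congr (filter_congr fun w _ => ?_) fun _ _ => rfl
  exact (and_iff_right_of_imp fun h => h ▸ hk).symm

lemma sum_AhatPoly (j : ℕ) :
    ∑ k ∈ Icc j ((m + 1) / 2), AhatPoly m k = ∑ k ∈ Ico j (m + 2 - j), Apoly m k := by
  -- the fibre of `w ↦ min (w(1), m + 1 - w(1))` over `k` is `{w | w(1) ∈ {k, m + 1 - k}}`
  rw [sum_Apoly, ← sum_fiberwise_of_maps_to
    (g := fun w : Perm (Fin m) => min ((w 0 : ℕ) + 1) (m - w 0)) (t := Icc j ((m + 1) / 2))]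
  · refine sum_congr rfl fun k hk => ?_
    simp only [AhatPoly, forall_val_eq_zero_imp_iff, filter_filter]
    refine sum_congr (filter_congr fun w _ => ?_) fun _ _ => rfl
    simp only [mem_Icc, mem_Ico] at hk ⊢
    omega
  · intro w hw
    simp only [mem_filter, mem_Icc, mem_Ico] at hw ⊢
    omega

end FirstValue

lemma Apoly_add_two {m j : ℕ} (hj : 1 ≤ j) (hjm : j ≤ m + 2) :
    Apoly (m + 2) j =
      X * ∑ k ∈ Ico 1 j, Apoly (m + 1) k + ∑ k ∈ Ico j (m + 2), Apoly (m + 1) k := by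
  have hp : j - 1 < m + 2 := by omega
  calc Apoly (m + 2) j = ∑ w with w 0 = ⟨j - 1, hp⟩, X ^ des w := by
        rw [Apoly_eq_sum_filter]
        refine sum_congr (filter_congr fun w _ => ?_) fun _ _ => rfl
        simp only [Fin.ext_iff]
        omega
    _ = ∑ e : Perm (Fin (m + 1)), if (e 0 : ℕ) < j - 1 then X * X ^ des e else X ^ des e := by
        rw [sum_filter_apply_zero_eq_sum_consPerm]
        refine sum_congr rfl fun e _ => ?_
        rw [des_consPerm, pow_add]
        split_ifs <;> simp_all [Fin.lt_def]
    _ = _ := by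
        rw [sum_ite, ← mul_sum, sum_Apoly, sum_Apoly]
        congr 1
        · congr 1
          exact sum_congr (filter_congr fun e _ => by simp only [mem_Ico]; omega) fun _ _ => rfl
        · refine sum_congr (filter_congr fun e _ => ?_) fun _ _ => rfl
          simp only [mem_Ico]
          have := (e 0).isLt
          omega

theorem stmt9 (n j : ℕ) (hj1 : 1 ≤ j) (hj : 2 * j < n + 1) :
    AhatPoly' n j =
      (1 + X) * (∑ k ∈ Finset.Icc 1 (j - 1), AhatPoly' (n - 1) k) +
        2 * X * ∑ k ∈ Finset.Icc j (n / 2), AhatPoly (n - 1) k := by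
  obtain ⟨m, rfl⟩ : ∃ m, n = m + 2 := ⟨n - 2, by omega⟩
  have hsplit_left := sum_Ico_consecutive (Apoly (m + 1)) hj1 (show j ≤ m + 3 - j by omega)
  have hsplit_right := sum_Ico_consecutive (Apoly (m + 1))
    (show j ≤ m + 3 - j by omega) (show m + 3 - j ≤ m + 2 by omega)
  have hreflect :
      ∑ k ∈ Ico 1 j, Apoly (m + 1) (m + 2 - k) = ∑ k ∈ Ico (m + 3 - j) (m + 2), Apoly (m + 1) k :=
    sum_Ico_reflect _ _ (by omega)
  rw [show m + 2 - 1 = m + 1 from rfl, show (m + 2) / 2 = (m + 1 + 1) / 2 from rfl, sum_AhatPoly,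
    ← Ico_add_one_right_eq_Icc, Nat.sub_add_cancel hj1]
  simp only [AhatPoly', sum_add_distrib, ← mul_sum]
  rw [Apoly_add_two hj1 (by omega), Apoly_add_two (j := m + 2 + 1 - j) (by omega) (by omega)]
  simp only [show m + 2 + 1 - j = m + 3 - j from rfl, show m + 1 + 1 = m + 2 from rfl]
  rw [← hsplit_left, ← hsplit_right, hreflect]
  ring
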